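/- arXiv:1702.08211 — 3 statements merged into one kernel-verified Lean document; each statement's English description precedes it below -/
import Mathlib

section
/- Let q be a probability vector over {1,…,K} with q(1) ≥ γ > 0, and let s(j) = q(1) + ⋯ + q(j) be its partial sums. Then ∑_{j=1}^K q(j)/s(j) ≤ 1 + ln(1/γ). -/
open Finset

lemma stmt_1_aux (q : ℕ → ℝ) (γ : ℝ) (hγ : 0 < γ) (hq1 : γ ≤ q 1) :
    ∀ K, 1 ≤ K → (∀ j ∈ Finset.Icc 1 K, 0 ≤ q j) →
    ∑ j ∈ Finset.Icc 1 K, q j / (∑ i ∈ Finset.Icc 1 j, q i)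
      ≤ 1 + Real.log (∑ i ∈ Finset.Icc 1 K, q i) - Real.log (q 1) := by
  intro K hK1
  induction K, hK1 using Nat.le_induction with
  | base =>
    simp only [Finset.Icc_self, Finset.sum_singleton]
    have hq1pos : 0 < q 1 := lt_of_lt_of_le hγ hq1
    rw [div_self (ne_of_gt hq1pos)]
    simp
  | succ K hK ih =>
    intro hq0
    have hq0' : ∀ j ∈ Finset.Icc 1 K, 0 ≤ q j := by
      intro j hj
      exact hq0 j (Finset.Icc_subset_Icc_right (Nat.le_succ K) hj)
    have hq1pos : 0 < q 1 := lt_of_lt_of_le hγ hq1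
    set sK := ∑ i ∈ Finset.Icc 1 K, q i with hsK
    have hsKpos : 0 < sK := by
      have h1 : q 1 ≤ sK :=
        Finset.single_le_sum hq0' (Finset.mem_Icc.mpr ⟨le_refl 1, hK⟩)
      linarith
    have hqK1 : 0 ≤ q (K + 1) :=
      hq0 (K + 1) (Finset.mem_Icc.mpr ⟨Nat.le_succ_of_le hK, le_refl _⟩)
    have hsum : ∑ i ∈ Finset.Icc 1 (K + 1), q i = sK + q (K + 1) :=
      Finset.sum_Icc_succ_top (Nat.le_succ_of_le (Nat.one_le_iff_ne_zero.mpr (by omega))) q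
    set sK1 := ∑ i ∈ Finset.Icc 1 (K + 1), q i with hsK1
    have hsK1pos : 0 < sK1 := by rw [hsum]; linarith
    have hstep : q (K + 1) / sK1 ≤ Real.log sK1 - Real.log sK := by
      have hx : (0:ℝ) < sK / sK1 := div_pos hsKpos hsK1pos
      have := Real.log_le_sub_one_of_pos hx
      rw [Real.log_div (ne_of_gt hsKpos) (ne_of_gt hsK1pos)] at this
      have hq : q (K + 1) / sK1 = 1 - sK / sK1 := by
        field_simp
        linarith [hsum]
      linarith
    have hsumdiv : ∑ j ∈ Finset.Icc 1 (K + 1), q j / (∑ i ∈ Finset.Icc 1 j, q i)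
        = (∑ j ∈ Finset.Icc 1 K, q j / (∑ i ∈ Finset.Icc 1 j, q i)) + q (K + 1) / sK1 :=
      Finset.sum_Icc_succ_top (Nat.le_succ_of_le (Nat.one_le_iff_ne_zero.mpr (by omega))) _
    rw [hsumdiv]
    have ihK := ih hq0'
    linarith

/-- If `q` is a probability vector over `{1,…,K}` with `q 1 ≥ γ > 0`, and
`s j = q 1 + ⋯ + q j`, then `∑_{j=1}^K q j / s j ≤ 1 + ln (1/γ)`. -/
theorem stmt_1 (K : ℕ) (hK : 1 ≤ K) (q : ℕ → ℝ) (γ : ℝ) (hγ : 0 < γ)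
    (hq0 : ∀ j ∈ Finset.Icc 1 K, 0 ≤ q j)
    (hqsum : ∑ j ∈ Finset.Icc 1 K, q j = 1)
    (hq1 : γ ≤ q 1) :
    ∑ j ∈ Finset.Icc 1 K, q j / (∑ i ∈ Finset.Icc 1 j, q i)
      ≤ 1 + Real.log (1 / γ) := by
  have h := stmt_1_aux q γ hγ hq1 K hK hq0
  rw [hqsum, Real.log_one] at h
  have hlog : Real.log γ ≤ Real.log (q 1) :=
    Real.log_le_log hγ hq1
  rw [one_div, Real.log_inv]
  linarith
end

section
/- Let f : [0,1]^d → [0,1] be 1-Lipschitz with respect to the sup norm. For every depth M ≥ 1, partition [0,1]^d into 2^{Md} dyadic cubes of side 2^{-M}; then there exist coefficients c_m(σ_{1:m}) ∈ {-1, 0, 1} for all m = 1,…,M and all dyadic indices σ_{1:m} such that the piecewise-constant function f_M(x) = 1/2 + ∑_{m=1}^M 2^{-m} c_m(σ_{1:m}(x)), where σ_{1:m}(x) indexes the depth-m dyadic cube containing x, satisfies sup_{x ∈ [0,1]^d} |f_M(x) − f(x)| ≤ 2^{-M}. -/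
open Finset

/-!
Build the approximation greedily, depth by depth. On each dyadic cube keep the invariant
that the current value is within `2^{-(m+1)}` of `f` at the centre of the cube. Passing to a
child cube moves the centre by at most `2^{-(m+2)}` in sup norm, so since `f` is 1-Lipschitz
the error at the child's centre is at most `3 · 2^{-(m+2)}`; rounding it to the nearest
multiple of `2^{-(m+1)}` with coefficient in `{-1, 0, 1}` restores the invariant at depth
`m + 1`. At depth `M` the point `x` is within `2^{-(M+1)}` of its cube's centre, which gives
the total error `2^{-M}`.
-/

noncomputable def quantize (t : ℝ) : ℝ :=
  if t < -(1 / 2) then -1 else if 1 / 2 < t then 1 else 0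

lemma quantize_mem (t : ℝ) : quantize t = -1 ∨ quantize t = 0 ∨ quantize t = 1 := by
  unfold quantize; split_ifs <;> simp

lemma abs_sub_quantize_le {t : ℝ} (h : |t| ≤ 3 / 2) : |t - quantize t| ≤ 1 / 2 := by
  rw [abs_le] at h ⊢
  unfold quantize; split_ifs <;> constructor <;> linarith

lemma abs_add_quantize_div_sub_le {s a b : ℝ} (hs : 0 < s) (h : |a - b| ≤ 3 / (2 * s)) :
    |b + quantize (s * (a - b)) / s - a| ≤ 1 / (2 * s) := by
  have hst : |s * (a - b)| ≤ 3 / 2 := by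
    rw [abs_mul, abs_of_pos hs]
    calc s * |a - b| ≤ s * (3 / (2 * s)) := by gcongr
      _ = 3 / 2 := by field_simp
  calc |b + quantize (s * (a - b)) / s - a|
      = |s * (a - b) - quantize (s * (a - b))| / s := by
        rw [← abs_neg, ← abs_of_pos hs, ← abs_div, abs_of_pos hs]
        congr 1
        field_simp
        ring
    _ ≤ (1 / 2) / s := by gcongr; exact abs_sub_quantize_le hst
    _ = 1 / (2 * s) := by ring

namespace DyadicCube

variable {d : ℕ}

noncomputable def address (m : ℕ) (x : Fin d → ℝ) : Fin d → ℤ :=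
  fun i => ⌊(2 : ℝ) ^ m * x i⌋

-- `Int.ediv` by `2` rounds down, also for negative addresses.
def parent (σ : Fin d → ℤ) : Fin d → ℤ := fun i => σ i / 2

lemma parent_address (m : ℕ) (x : Fin d → ℝ) : parent (address (m + 1) x) = address m x := by
  funext i
  rw [address, show (2 : ℝ) ^ m * x i = 2 ^ (m + 1) * x i / (2 : ℕ) by push_cast; ring,
    Int.floor_div_natCast]
  rfl

/-- Projected onto `[0,1]^d`, since `address m x` lies outside `[0, 2^m)^d` when some `x i = 1`. -/
noncomputable def center (m : ℕ) (σ : Fin d → ℤ) : Fin d → ℝ :=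
  fun i => Set.projIcc (0 : ℝ) 1 zero_le_one ((σ i + 1 / 2) / 2 ^ m)

lemma center_mem (m : ℕ) (σ : Fin d → ℤ) : center m σ ∈ Set.Icc 0 1 :=
  ⟨fun _ => (Set.projIcc 0 1 zero_le_one _).2.1,
    fun _ => (Set.projIcc 0 1 zero_le_one _).2.2⟩

lemma abs_center_sub_center_div_two (m : ℕ) (k : ℤ) :
    |((k : ℝ) + 1 / 2) / 2 ^ (m + 1) - (((k / 2 : ℤ) : ℝ) + 1 / 2) / 2 ^ m| =
      1 / 2 ^ (m + 2) := by
  have hk : (k : ℝ) = ((k % 2 : ℤ) : ℝ) + 2 * ((k / 2 : ℤ) : ℝ) := by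
    exact_mod_cast (Int.emod_add_mul_ediv k 2).symm
  have hdiff : ((k : ℝ) + 1 / 2) / 2 ^ (m + 1) - (((k / 2 : ℤ) : ℝ) + 1 / 2) / 2 ^ m
      = (((k % 2 : ℤ) : ℝ) - 1 / 2) / 2 ^ (m + 1) := by
    rw [hk]; field_simp; ring
  have hnum : |((k % 2 : ℤ) : ℝ) - 1 / 2| = 1 / 2 := by
    rcases Int.emod_two_eq_zero_or_one k with h | h <;> rw [h] <;>
      norm_num [abs_of_pos, abs_of_neg]
  rw [hdiff, abs_div, hnum, abs_of_pos (by positivity), pow_succ _ (m + 1)]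
  ring

lemma abs_floor_center_sub_le (m : ℕ) (y : ℝ) :
    |((⌊(2 : ℝ) ^ m * y⌋ : ℝ) + 1 / 2) / 2 ^ m - y| ≤ 1 / 2 ^ (m + 1) := by
  have h₁ := Int.floor_le ((2 : ℝ) ^ m * y)
  have h₂ := Int.lt_floor_add_one ((2 : ℝ) ^ m * y)
  have hdiff : ((⌊(2 : ℝ) ^ m * y⌋ : ℝ) + 1 / 2) / 2 ^ m - y
      = ((⌊(2 : ℝ) ^ m * y⌋ : ℝ) + 1 / 2 - 2 ^ m * y) / 2 ^ m := by field_simp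
  have hnum : |(⌊(2 : ℝ) ^ m * y⌋ : ℝ) + 1 / 2 - 2 ^ m * y| ≤ 1 / 2 := by
    rw [abs_le]; constructor <;> linarith
  rw [hdiff, abs_div, abs_of_pos (by positivity : (0 : ℝ) < 2 ^ m)]
  calc _ ≤ (1 / 2) / (2 : ℝ) ^ m := by gcongr
    _ = 1 / 2 ^ (m + 1) := by rw [pow_succ]; ring

lemma norm_center_sub_center_parent_le (m : ℕ) (σ : Fin d → ℤ) :
    ‖center (m + 1) σ - center m (parent σ)‖ ≤ 1 / 2 ^ (m + 2) := by
  refine (pi_norm_le_iff_of_nonneg (by positivity)).2 fun i => ?_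
  exact (Set.abs_projIcc_sub_projIcc _).trans (abs_center_sub_center_div_two m (σ i)).le

lemma norm_center_address_sub_le {x : Fin d → ℝ} (hx : x ∈ Set.Icc 0 1) (m : ℕ) :
    ‖center m (address m x) - x‖ ≤ 1 / 2 ^ (m + 1) := by
  refine (pi_norm_le_iff_of_nonneg (by positivity)).2 fun i => ?_
  have hxi : (Set.projIcc (0 : ℝ) 1 zero_le_one (x i) : ℝ) = x i :=
    congrArg Subtype.val (Set.projIcc_of_mem _ ⟨hx.1 i, hx.2 i⟩)
  rw [Real.norm_eq_abs, Pi.sub_apply, center, ← hxi]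
  exact (Set.abs_projIcc_sub_projIcc _).trans (abs_floor_center_sub_le m (x i))

end DyadicCube

open DyadicCube

section Greedy

variable {d : ℕ} (f : (Fin d → ℝ) → ℝ)

/-- The value of `f_m` on the depth-`m` cube with address `σ`. -/
noncomputable def greedyApprox : ℕ → (Fin d → ℤ) → ℝ
  | 0, _ => 1 / 2
  | m + 1, σ => greedyApprox m (parent σ) + quantize (2 ^ (m + 1) *
      (f (center (m + 1) σ) - greedyApprox m (parent σ))) / 2 ^ (m + 1)

noncomputable def greedyCoeff (m : ℕ) (σ : Fin d → ℤ) : ℝ :=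
  quantize (2 ^ m * (f (center m σ) - greedyApprox f (m - 1) (parent σ)))

lemma greedyApprox_succ (m : ℕ) (σ : Fin d → ℤ) :
    greedyApprox f (m + 1) σ =
      greedyApprox f m (parent σ) + greedyCoeff f (m + 1) σ / 2 ^ (m + 1) :=
  rfl

lemma greedyApprox_address (m : ℕ) (x : Fin d → ℝ) :
    greedyApprox f m (address m x) =
      1 / 2 + ∑ k ∈ Icc 1 m, greedyCoeff f k (address k x) / 2 ^ k := by
  induction m with
  | zero => simp [greedyApprox]
  | succ m ih =>
    rw [greedyApprox_succ, parent_address, ih, sum_Icc_succ_top (by omega), add_assoc]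

lemma abs_greedyApprox_sub_le
    (hf01 : ∀ x ∈ Set.Icc (0 : Fin d → ℝ) 1, f x ∈ Set.Icc (0 : ℝ) 1)
    (hfLip : ∀ x ∈ Set.Icc (0 : Fin d → ℝ) 1, ∀ y ∈ Set.Icc (0 : Fin d → ℝ) 1,
        |f x - f y| ≤ ‖x - y‖) (m : ℕ) (σ : Fin d → ℤ) :
    |greedyApprox f m σ - f (center m σ)| ≤ 1 / 2 ^ (m + 1) := by
  induction m generalizing σ with
  | zero =>
    have h := hf01 _ (center_mem 0 σ)
    rw [greedyApprox, abs_le]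
    constructor <;> linarith [h.1, h.2]
  | succ m ih =>
    set e := greedyApprox f m (parent σ)
    have hstep : |f (center (m + 1) σ) - f (center m (parent σ))| ≤ 1 / 2 ^ (m + 2) :=
      (hfLip _ (center_mem _ _) _ (center_mem _ _)).trans (norm_center_sub_center_parent_le m σ)
    have herr : |f (center (m + 1) σ) - e| ≤ 3 / (2 * 2 ^ (m + 1)) :=
      calc |f (center (m + 1) σ) - e|
          ≤ |f (center (m + 1) σ) - f (center m (parent σ))| + |f (center m (parent σ)) - e| :=
            abs_sub_le _ _ _
        _ ≤ 1 / 2 ^ (m + 2) + 1 / 2 ^ (m + 1) := by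
            rw [abs_sub_comm (f _) e]; exact add_le_add hstep (ih _)
        _ = 3 / (2 * 2 ^ (m + 1)) := by rw [pow_succ _ (m + 1)]; field_simp; ring
    have h := abs_add_quantize_div_sub_le (by positivity) herr
    rwa [← pow_succ'] at h

end Greedy

theorem stmt_4_general (d M : ℕ)
    (f : (Fin d → ℝ) → ℝ)
    (hf01 : ∀ x ∈ Set.Icc (0 : Fin d → ℝ) 1, f x ∈ Set.Icc (0 : ℝ) 1)
    (hfLip : ∀ x ∈ Set.Icc (0 : Fin d → ℝ) 1, ∀ y ∈ Set.Icc (0 : Fin d → ℝ) 1,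
        |f x - f y| ≤ ‖x - y‖) :
    ∃ c : ℕ → (Fin d → ℤ) → ℝ,
      (∀ m σ, c m σ = -1 ∨ c m σ = 0 ∨ c m σ = 1) ∧
      ∀ x ∈ Set.Icc (0 : Fin d → ℝ) 1,
        |(1 / 2 + ∑ m ∈ Finset.Icc 1 M,
              (2 : ℝ) ^ (-(m : ℤ)) * c m (fun i => ⌊(2 : ℝ) ^ m * x i⌋))
            - f x| ≤ (2 : ℝ) ^ (-(M : ℤ)) := by
  refine ⟨greedyCoeff f, fun m σ => quantize_mem _, fun x hx => ?_⟩
  have hcube : |f (center M (address M x)) - f x| ≤ 1 / 2 ^ (M + 1) :=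
    (hfLip _ (center_mem _ _) x hx).trans (norm_center_address_sub_le hx M)
  simp only [zpow_neg, zpow_natCast, ← div_eq_inv_mul]
  calc |1 / 2 + ∑ m ∈ Icc 1 M, greedyCoeff f m (address m x) / 2 ^ m - f x|
      = |greedyApprox f M (address M x) - f x| := by rw [greedyApprox_address]
    _ ≤ |greedyApprox f M (address M x) - f (center M (address M x))|
        + |f (center M (address M x)) - f x| := abs_sub_le _ _ _
    _ ≤ 1 / 2 ^ (M + 1) + 1 / 2 ^ (M + 1) :=
        add_le_add (abs_greedyApprox_sub_le f hf01 hfLip M _) hcube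
    _ = (2 ^ M)⁻¹ := by rw [pow_succ]; ring

/-- Wavelet-like approximation of a 1-Lipschitz function `f : [0,1]^d → [0,1]`
(sup norm on the domain): for every depth `M ≥ 1` there are coefficients
`c_m(σ) ∈ {-1,0,1}` indexed by depth-`m` dyadic addresses `σ` such that the
piecewise-constant function
`f_M(x) = 1/2 + ∑_{m=1}^M 2^{-m} c_m(σ_{1:m}(x))`, where the depth-`m`
address of `x` is `σ_{1:m}(x) = (⌊2^m x_i⌋)_i`, satisfies
`|f_M(x) − f(x)| ≤ 2^{-M}` for all `x ∈ [0,1]^d`. -/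
theorem stmt_4 (d M : ℕ) (hd : 1 ≤ d) (hM : 1 ≤ M)
    (f : (Fin d → ℝ) → ℝ)
    (hf01 : ∀ x ∈ Set.Icc (0 : Fin d → ℝ) 1, f x ∈ Set.Icc (0 : ℝ) 1)
    (hfLip : ∀ x ∈ Set.Icc (0 : Fin d → ℝ) 1, ∀ y ∈ Set.Icc (0 : Fin d → ℝ) 1,
        |f x - f y| ≤ ‖x - y‖) :
    ∃ c : ℕ → (Fin d → ℤ) → ℝ,
      (∀ m σ, c m σ = -1 ∨ c m σ = 0 ∨ c m σ = 1) ∧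
      ∀ x ∈ Set.Icc (0 : Fin d → ℝ) 1,
        |(1 / 2 + ∑ m ∈ Finset.Icc 1 M,
              (2 : ℝ) ^ (-(m : ℤ)) * c m (fun i => ⌊(2 : ℝ) ^ m * x i⌋))
            - f x| ≤ (2 : ℝ) ^ (-(M : ℤ)) :=
  stmt_4_general d M f hf01 hfLip
end

section
/- Consider the Hedge algorithm over K actions with nonincreasing learning rates η_1 ≥ η_2 ≥ ⋯ > 0 and nonnegative losses ℓ_t(k) ≥ 0, where p_1 is uniform and p_t(i) ∝ exp(−η_t ∑_{s<t} ℓ_s(i)). Then ∑_{t=1}^T ∑_i p_t(i) ℓ_t(i) − min_k ∑_{t=1}^T ℓ_t(k) ≤ (ln K)/η_T + (1/2) ∑_{t=1}^T η_t ∑_i p_t(i) ℓ_t(i)². -/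
/-!
Track the potential `Φ_η(L) = η⁻¹ log((1/K) ∑ᵢ exp(-η Lᵢ))` of the cumulative losses `L`.
Since `exp(-x) ≤ 1 - x + x²/2` for `x ≥ 0` and `log y ≤ y - 1`, each round's expected loss is
at most the drop `Φ_{η_t}(L_t) - Φ_{η_t}(L_{t+1})` plus `(η_t/2) ∑ᵢ p_t(i) ℓ_t(i)²`.
By the power-mean inequality `Φ_η(L)` is nondecreasing in `η`, so with nonincreasing learning
rates the drops telescope to at most `Φ_{η_0}(L_1) - Φ_{η_T}(L_{T+1}) = -Φ_{η_T}(L_{T+1})`, and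
keeping only the term of the comparator `k` in the sum bounds this by `L_{T+1}(k) + (ln K)/η_T`.
-/

open Finset

lemma Real.exp_neg_le_one_sub_add_sq_div_two {x : ℝ} (hx : 0 ≤ x) :
    Real.exp (-x) ≤ 1 - x + x ^ 2 / 2 := by
  have hq : 0 < 1 - x + x ^ 2 / 2 := by nlinarith [sq_nonneg (x - 1)]
  -- `(1 - x + x²/2)(1 + x + x²/2) = 1 + x⁴/4`
  have h : 1 ≤ (1 - x + x ^ 2 / 2) * Real.exp x :=
    calc 1 ≤ (1 - x + x ^ 2 / 2) * (1 + x + x ^ 2 / 2) := by nlinarith [pow_two_nonneg (x ^ 2)]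
      _ ≤ (1 - x + x ^ 2 / 2) * Real.exp x :=
        mul_le_mul_of_nonneg_left (Real.quadratic_le_exp_of_nonneg hx) hq.le
  rw [Real.exp_neg, inv_le_iff_one_le_mul₀ (Real.exp_pos x)]
  linarith

lemma sum_Icc_diag_sub_le (f : ℕ → ℕ → ℝ) (hf : ∀ t, f (t + 1) (t + 1) ≤ f t (t + 1)) (T : ℕ) :
    ∑ t ∈ Icc 1 T, (f t t - f t (t + 1)) ≤ f 0 1 - f T (T + 1) := by
  induction T with
  | zero => simp
  | succ T ih =>
    rw [sum_Icc_succ_top (by omega)]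
    linarith [hf T]

namespace Hedge

variable {ι : Type*} [Fintype ι]

noncomputable def weights (η : ℝ) (L : ι → ℝ) (i : ι) : ℝ :=
  Real.exp (-η * L i) / ∑ j, Real.exp (-η * L j)

noncomputable def potential (η : ℝ) (L : ι → ℝ) : ℝ :=
  Real.log ((∑ i, Real.exp (-η * L i)) / Fintype.card ι) / η

noncomputable def mixLoss (η : ℝ) (p ℓ : ι → ℝ) : ℝ :=
  -Real.log (∑ i, p i * Real.exp (-η * ℓ i)) / η

lemma weights_nonneg (η : ℝ) (L : ι → ℝ) (i : ι) : 0 ≤ weights η L i := by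
  unfold weights
  positivity

lemma sum_exp_pos [Nonempty ι] (η : ℝ) (L : ι → ℝ) : 0 < ∑ i, Real.exp (-η * L i) :=
  sum_pos (fun _ _ ↦ Real.exp_pos _) univ_nonempty

lemma sum_weights [Nonempty ι] (η : ℝ) (L : ι → ℝ) : ∑ i, weights η L i = 1 := by
  simp only [weights, ← sum_div]
  exact div_self (sum_exp_pos η L).ne'

lemma potential_zero (η : ℝ) : potential η (0 : ι → ℝ) = 0 := by
  simp [potential]

lemma potential_le_of_le [Nonempty ι] (L : ι → ℝ) {a b : ℝ} (ha : 0 < a) (hab : a ≤ b) :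
    potential a L ≤ potential b L := by
  have hb : 0 < b := ha.trans_le hab
  have hK : (0 : ℝ) < Fintype.card ι := by exact_mod_cast Fintype.card_pos
  have hmean : ∀ c : ℝ, (∑ i, Real.exp (-c * L i)) / Fintype.card ι
      = ∑ i, (Fintype.card ι : ℝ)⁻¹ * Real.exp (-c * L i) := by
    intro c
    rw [← mul_sum, div_eq_inv_mul]
  have hpow : ∀ i, Real.exp (-a * L i) ^ (b / a) = Real.exp (-b * L i) := by
    intro i
    rw [← Real.exp_mul]
    congr 1
    field_simp
  -- Jensen for `x ↦ x ^ (b / a)`, convex since `a ≤ b`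
  have hjensen : ((∑ i, Real.exp (-a * L i)) / Fintype.card ι) ^ (b / a)
      ≤ (∑ i, Real.exp (-b * L i)) / Fintype.card ι := by
    rw [hmean, hmean]
    simp only [← hpow]
    refine Real.rpow_arith_mean_le_arith_mean_rpow univ _ _ (fun _ _ ↦ by positivity) ?_
      (fun _ _ ↦ (Real.exp_pos _).le) ((one_le_div ha).2 hab)
    simp [hK.ne']
  have hlog := Real.log_le_log (by positivity) hjensen
  rw [Real.log_rpow (div_pos (sum_exp_pos a L) hK)] at hlog
  unfold potential
  rw [div_le_div_iff₀ ha hb]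
  calc Real.log ((∑ i, Real.exp (-a * L i)) / Fintype.card ι) * b
      = a * (b / a * Real.log ((∑ i, Real.exp (-a * L i)) / Fintype.card ι)) := by
        field_simp
    _ ≤ a * Real.log ((∑ i, Real.exp (-b * L i)) / Fintype.card ι) :=
        mul_le_mul_of_nonneg_left hlog ha.le
    _ = _ := mul_comm _ _

lemma neg_potential_le {η : ℝ} (hη : 0 < η) (L : ι → ℝ) (k : ι) :
    -potential η L ≤ L k + Real.log (Fintype.card ι) / η := by
  have : Nonempty ι := ⟨k⟩
  have hK : (0 : ℝ) < Fintype.card ι := by exact_mod_cast Fintype.card_pos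
  have hsingle : Real.exp (-η * L k) / Fintype.card ι
      ≤ (∑ i, Real.exp (-η * L i)) / Fintype.card ι := by
    gcongr
    exact single_le_sum (f := fun i ↦ Real.exp (-η * L i)) (fun i _ ↦ (Real.exp_pos _).le)
      (mem_univ k)
  have hlog := Real.log_le_log (by positivity) hsingle
  rw [Real.log_div (Real.exp_pos _).ne' hK.ne', Real.log_exp] at hlog
  have hdiv := div_le_div_of_nonneg_right hlog hη.le
  rw [sub_div, neg_mul, neg_div, mul_div_cancel_left₀ _ hη.ne'] at hdiv
  unfold potential
  linarith

lemma sum_mul_le_mixLoss_add {η : ℝ} (hη : 0 < η) {p ℓ : ι → ℝ} (hp0 : ∀ i, 0 ≤ p i)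
    (hp1 : ∑ i, p i = 1) (hℓ : ∀ i, 0 ≤ ℓ i) :
    ∑ i, p i * ℓ i ≤ mixLoss η p ℓ + η / 2 * ∑ i, p i * ℓ i ^ 2 := by
  set S := ∑ i, p i * Real.exp (-η * ℓ i)
  have hS : 0 < S := by
    obtain ⟨j, -, hj⟩ := exists_lt_of_sum_lt (s := univ) (f := fun _ ↦ (0 : ℝ)) (g := p) (by simp [hp1])
    exact sum_pos' (fun i _ ↦ mul_nonneg (hp0 i) (Real.exp_pos _).le)
      ⟨j, mem_univ j, mul_pos hj (Real.exp_pos _)⟩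
  have hquad : S ≤ 1 - η * ∑ i, p i * ℓ i + η ^ 2 / 2 * ∑ i, p i * ℓ i ^ 2 :=
    calc S ≤ ∑ i, p i * (1 - η * ℓ i + (η * ℓ i) ^ 2 / 2) := by
          refine sum_le_sum fun i _ ↦ mul_le_mul_of_nonneg_left ?_ (hp0 i)
          rw [neg_mul]
          exact Real.exp_neg_le_one_sub_add_sq_div_two (mul_nonneg hη.le (hℓ i))
      _ = ∑ i, p i - η * ∑ i, p i * ℓ i + η ^ 2 / 2 * ∑ i, p i * ℓ i ^ 2 := by
          simp only [mul_sum, ← sum_sub_distrib, ← sum_add_distrib]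
          exact sum_congr rfl fun i _ ↦ by ring
      _ = _ := by rw [hp1]
  have hlog : -(S - 1) / η ≤ -Real.log S / η :=
    div_le_div_of_nonneg_right (neg_le_neg (Real.log_le_sub_one_of_pos hS)) hη.le
  have hexpand : -(1 - η * ∑ i, p i * ℓ i + η ^ 2 / 2 * ∑ i, p i * ℓ i ^ 2 - 1) / η
      = ∑ i, p i * ℓ i - η / 2 * ∑ i, p i * ℓ i ^ 2 := by
    field_simp
    ring
  have hmono : -(1 - η * ∑ i, p i * ℓ i + η ^ 2 / 2 * ∑ i, p i * ℓ i ^ 2 - 1) / η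
      ≤ -(S - 1) / η := div_le_div_of_nonneg_right (by linarith) hη.le
  unfold mixLoss
  linarith

lemma mixLoss_weights [Nonempty ι] (η : ℝ) (L ℓ : ι → ℝ) :
    mixLoss η (weights η L) ℓ = potential η L - potential η (L + ℓ) := by
  have hK : (Fintype.card ι : ℝ) ≠ 0 := by exact_mod_cast Fintype.card_ne_zero
  have hratio : ∑ i, weights η L i * Real.exp (-η * ℓ i)
      = (∑ i, Real.exp (-η * (L + ℓ) i)) / ∑ i, Real.exp (-η * L i) := by
    rw [sum_div]
    refine sum_congr rfl fun i _ ↦ ?_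
    rw [weights, div_mul_eq_mul_div, ← Real.exp_add, Pi.add_apply, mul_add]
  unfold mixLoss potential
  rw [hratio, Real.log_div (sum_exp_pos η (L + ℓ)).ne' (sum_exp_pos η L).ne',
    Real.log_div (sum_exp_pos η L).ne' hK, Real.log_div (sum_exp_pos η (L + ℓ)).ne' hK]
  ring

end Hedge

open Hedge

theorem stmt_11_general (K T : ℕ)
    (ℓ : ℕ → Fin K → ℝ) (η : ℕ → ℝ) (p : ℕ → Fin K → ℝ)
    (hℓ0 : ∀ t i, 0 ≤ ℓ t i)
    (hηpos : ∀ t, 0 < η t)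
    (hηmono : ∀ s t : ℕ, s ≤ t → η t ≤ η s)
    (hp : ∀ t ∈ Finset.Icc 1 T, ∀ i : Fin K,
        p t i = Real.exp (-η t * ∑ s ∈ Finset.Ico 1 t, ℓ s i) /
          ∑ j : Fin K, Real.exp (-η t * ∑ s ∈ Finset.Ico 1 t, ℓ s j)) :
    ∀ k : Fin K,
      (∑ t ∈ Finset.Icc 1 T, ∑ i : Fin K, p t i * ℓ t i)
          - ∑ t ∈ Finset.Icc 1 T, ℓ t k
        ≤ Real.log K / η T
          + (1 / 2) * ∑ t ∈ Finset.Icc 1 T, η t * ∑ i : Fin K, p t i * ℓ t i ^ 2 := by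
  intro k
  have : Nonempty (Fin K) := ⟨k⟩
  set L : ℕ → Fin K → ℝ := fun t i ↦ ∑ s ∈ Ico 1 t, ℓ s i
  have hround : ∀ t ∈ Icc 1 T, ∑ i, p t i * ℓ t i
      ≤ potential (η t) (L t) - potential (η t) (L (t + 1))
        + 1 / 2 * (η t * ∑ i, p t i * ℓ t i ^ 2) := by
    intro t ht
    have hpt : p t = weights (η t) (L t) := funext (hp t ht)
    have hL : L (t + 1) = L t + ℓ t := funext fun i ↦ sum_Ico_succ_top (mem_Icc.1 ht).1 _
    rw [hL, ← mixLoss_weights, ← hpt, ← mul_assoc, one_div_mul_eq_div]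
    exact sum_mul_le_mixLoss_add (hηpos t) (hpt ▸ weights_nonneg _ _)
      (hpt ▸ sum_weights _ _) (hℓ0 t)
  have htele := sum_Icc_diag_sub_le (fun t x ↦ potential (η t) (L x))
    (fun t ↦ potential_le_of_le _ (hηpos _) (hηmono _ _ t.le_succ)) T
  have hL1 : L 1 = 0 := funext fun i ↦ by simp [L]
  have hLT : L (T + 1) k = ∑ t ∈ Icc 1 T, ℓ t k := by simp only [L, Ico_add_one_right_eq_Icc]
  have hcomp := neg_potential_le (hηpos T) (L (T + 1)) k
  simp only [hL1, potential_zero, Fintype.card_fin, hLT] at htele hcomp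
  have hsum := (sum_le_sum hround).trans_eq sum_add_distrib
  rw [mul_sum]
  linarith

/-- Hedge with time-varying learning rates and nonnegative losses: if
`η_1 ≥ η_2 ≥ ⋯ > 0` and `p_t(i) ∝ exp(−η_t ∑_{s<t} ℓ_s(i))` (so `p_1` is
uniform), then for every comparator `k`,
`∑_{t=1}^T ∑_i p_t(i) ℓ_t(i) − ∑_{t=1}^T ℓ_t(k)
  ≤ (ln K)/η_T + (1/2) ∑_{t=1}^T η_t ∑_i p_t(i) ℓ_t(i)²`. -/
theorem stmt_11 (K T : ℕ) (hK : 1 ≤ K) (hT : 1 ≤ T)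
    (ℓ : ℕ → Fin K → ℝ) (η : ℕ → ℝ) (p : ℕ → Fin K → ℝ)
    (hℓ0 : ∀ t i, 0 ≤ ℓ t i)
    (hηpos : ∀ t, 0 < η t)
    (hηmono : ∀ s t : ℕ, s ≤ t → η t ≤ η s)
    (hp : ∀ t ∈ Finset.Icc 1 T, ∀ i : Fin K,
        p t i = Real.exp (-η t * ∑ s ∈ Finset.Ico 1 t, ℓ s i) /
          ∑ j : Fin K, Real.exp (-η t * ∑ s ∈ Finset.Ico 1 t, ℓ s j)) :
    ∀ k : Fin K,
      (∑ t ∈ Finset.Icc 1 T, ∑ i : Fin K, p t i * ℓ t i)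
          - ∑ t ∈ Finset.Icc 1 T, ℓ t k
        ≤ Real.log K / η T
          + (1 / 2) * ∑ t ∈ Finset.Icc 1 T, η t * ∑ i : Fin K, p t i * ℓ t i ^ 2 :=
  stmt_11_general K T ℓ η p hℓ0 hηpos hηmono hp
end
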